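/- Let σ be a primitive substitution prolongable on a letter a such that x = σ^∞(a) is non-periodic, and let u be a non-empty prefix of x satisfying that u is a prefix of σ(u). Then the return substitution σ_u (the unique substitution with Θ_{x,u} ∘ σ_u = σ ∘ Θ_{x,u}) satisfies |σ_u| ≤ |σ|·K_σ², where K_σ is a linear recurrence constant for x. -/

import Mathlib

/-- The factor of the sequence `x` starting at position `i` of length `n`. -/
def seqWord {A : Type*} (x : ℕ → A) (i n : ℕ) : List A :=
  (List.range n).map (fun k => x (i + k))

/-- The word `u` occurs in the sequence `x` at position `i`. -/
def occursAt {A : Type*} (x : ℕ → A) (u : List A) (i : ℕ) : Prop :=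
  seqWord x i u.length = u

/-- `u` is a factor of the sequence `x`. -/
def IsFactor {A : Type*} (x : ℕ → A) (u : List A) : Prop :=
  ∃ i, occursAt x u i

/-- `u` is a prefix of the sequence `x`. -/
def IsPrefixSeq {A : Type*} (u : List A) (x : ℕ → A) : Prop :=
  occursAt x u 0

/-- `x` is uniformly recurrent: every factor occurs in every sufficiently long window. -/
def UnifRec {A : Type*} (x : ℕ → A) : Prop :=
  ∀ u : List A, IsFactor x u → ∃ C, ∀ i, ∃ j, i ≤ j ∧ j < i + C ∧ occursAt x u j

/-- `w` is a return word to `u` in `x`: the factor between two consecutive occurrences of `u`. -/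
def IsReturnWord {A : Type*} (x : ℕ → A) (u w : List A) : Prop :=
  ∃ i j, i < j ∧ occursAt x u i ∧ occursAt x u j ∧
    (∀ k, i < k → k < j → ¬ occursAt x u k) ∧ w = seqWord x i (j - i)

/-- Apply a morphism (given on letters) to a word, by concatenation. -/
def morphApply {I A : Type*} (θ : I → List A) (l : List I) : List A :=
  (l.map θ).flatten

/-- Iterate an endomorphism `σ` of the free monoid `n` times on a word. -/
def morphIter {A : Type*} (σ : A → List A) : ℕ → List A → List A
  | 0, l => l
  | n + 1, l => morphApply σ (morphIter σ n l)

/-- `x` is ultimately periodic. -/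
def UltPeriodic {A : Type*} (x : ℕ → A) : Prop :=
  ∃ p > 0, ∃ N, ∀ n ≥ N, x (n + p) = x n

/-- `x` is linearly recurrent with constant `K`: it is uniformly recurrent and two
successive occurrences of any nonempty factor `u` differ by at most `K * |u|`. -/
def LinRec {A : Type*} (K : ℕ) (x : ℕ → A) : Prop :=
  UnifRec x ∧ ∀ u : List A, u ≠ [] → IsFactor x u →
    ∀ i, occursAt x u i → ∃ j, i < j ∧ j ≤ i + K * u.length ∧ occursAt x u j

/-- `σ` is prolongable on the letter `a`. -/
def Prolongable {A : Type*} (σ : A → List A) (a : A) : Prop :=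
  (∃ t, σ a = a :: t ∧ t ≠ []) ∧
    Filter.Tendsto (fun n => (morphIter σ n [a]).length) Filter.atTop Filter.atTop

/-- `σ` is growing: the image of each letter has length tending to infinity. -/
def Growing {A : Type*} (σ : A → List A) : Prop :=
  ∀ a, Filter.Tendsto (fun n => (morphIter σ n [a]).length) Filter.atTop Filter.atTop

/-- `σ` is primitive: some power sends every letter to a word containing every letter. -/
def Primitive {A : Type*} (σ : A → List A) : Prop :=
  ∃ n > 0, ∀ a b : A, b ∈ morphIter σ n [a]

/-- `x` is the fixed point `σ^∞(a)` of `σ`, prolongable on `a`. -/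
def IsFixedPointOf {A : Type*} (σ : A → List A) (a : A) (x : ℕ → A) : Prop :=
  x 0 = a ∧ ∀ n, IsPrefixSeq (morphIter σ n [a]) x

/-- The word `w` belongs to the language of the endomorphism `σ`. -/
def InLang {A : Type*} (σ : A → List A) (w : List A) : Prop :=
  ∃ a n, w <:+: morphIter σ n [a]

/-- The word `u` occurs at position `i` in the word `w`. -/
def listOccursAt {A : Type*} (w u : List A) (i : ℕ) : Prop :=
  i + u.length ≤ w.length ∧ (w.drop i).take u.length = u

/-- `|σ^k|`: the maximal length of the image of a letter under `σ^k`. -/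
def maxLen {A : Type*} [Fintype A] [Nonempty A] (σ : A → List A) (k : ℕ) : ℕ :=
  Finset.univ.sup' Finset.univ_nonempty (fun a => (morphIter σ k [a]).length)

/-- `⟨σ^k⟩`: the minimal length of the image of a letter under `σ^k`. -/
def minLen {A : Type*} [Fintype A] [Nonempty A] (σ : A → List A) (k : ℕ) : ℕ :=
  Finset.univ.inf' Finset.univ_nonempty (fun a => (morphIter σ k [a]).length)

/-- `(R, θ, z)` is the derived-sequence data of `x` on the prefix `u`: `θ 0, …, θ (R-1)`
enumerate the return words to `u` in order of first appearance in `x`, `z` is the derived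
sequence, i.e. the coding of the decomposition of `x` into return words to `u`,
so that `Θ_{x,u}(z) = x`. -/
def IsDerivedSeq {A : Type*} (x : ℕ → A) (u : List A) (R : ℕ)
    (θ : ℕ → List A) (z : ℕ → ℕ) : Prop :=
  (∀ i < R, IsReturnWord x u (θ i)) ∧
  (∀ w, IsReturnWord x u w → ∃ i < R, θ i = w) ∧
  (∀ i < R, ∀ j < R, i < j →
      sInf {k | occursAt x (θ i) k} < sInf {k | occursAt x (θ j) k}) ∧
  (∀ k, z k < R) ∧
  (∀ n, IsPrefixSeq (morphApply θ (seqWord z 0 n)) x)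

/-!
A return word `w` to `u` is at most `K|u|` long by linear recurrence. Conversely `|u| ≤ K|w|`:
otherwise the two occurrences of `u` bounding `w` make a segment of length `(K + 1)|w|` of
period `|w|`, and every window of length `|w|` of `x` reappears inside it, hence is a
permutation of `w`. Two consecutive windows of length `p` being permutations of each other
forces `x (k + p) = x k`, so `x` would be periodic. Applying `σ` to `θ i = Θ(σu i)` and
comparing lengths gives `|σu i| |u| ≤ K |σ(θ i)| ≤ K |σ| |θ i| ≤ |σ| K² |u|`.
-/

section Windows

variable {A : Type*} (x : ℕ → A)

theorem seqWord_length (i n : ℕ) : (seqWord x i n).length = n := by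
  simp [seqWord]

theorem getElem_seqWord {i n k : ℕ} (h : k < (seqWord x i n).length) :
    (seqWord x i n)[k] = x (i + k) := by
  simp [seqWord]

theorem occursAt_iff {v : List A} {t : ℕ} :
    occursAt x v t ↔ ∀ k (hk : k < v.length), x (t + k) = v[k] := by
  constructor
  · intro h k hk
    rw [List.getElem_of_eq h.symm hk, getElem_seqWord]
  · intro h
    refine List.ext_getElem (seqWord_length x t _) fun k _ hk => ?_
    rw [getElem_seqWord]
    exact h k hk

theorem occursAt_seqWord (i n : ℕ) : occursAt x (seqWord x i n) i :=
  (occursAt_iff x).mpr fun _ hk => (getElem_seqWord x hk).symm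

theorem seqWord_eq_of_occursAt_seqWord {i n t : ℕ} (h : occursAt x (seqWord x i n) t)
    {d q : ℕ} (hdq : d + q ≤ n) : seqWord x (t + d) q = seqWord x (i + d) q := by
  refine List.ext_getElem (by simp only [seqWord_length]) fun k hk _ => ?_
  rw [seqWord_length] at hk
  have hlt : d + k < (seqWord x i n).length := by rw [seqWord_length]; omega
  rw [getElem_seqWord, getElem_seqWord, add_assoc, add_assoc, (occursAt_iff x).mp h _ hlt,
    getElem_seqWord]

theorem seqWord_succ_eq_concat (i n : ℕ) :
    seqWord x i (n + 1) = seqWord x i n ++ [x (i + n)] := by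
  simp [seqWord, List.range_succ]

theorem seqWord_succ_eq_cons (i n : ℕ) :
    seqWord x i (n + 1) = x i :: seqWord x (i + 1) n := by
  simp only [seqWord, List.range_succ_eq_map, List.map_cons, List.map_map, Nat.add_zero]
  congr 2
  funext k
  simp only [Function.comp_apply]
  congr 1
  omega

theorem seqWord_succ_perm_iff (k p : ℕ) :
    (seqWord x (k + 1) p).Perm (seqWord x k p) ↔ x (k + p) = x k := by
  have hsplit : x k :: seqWord x (k + 1) p = seqWord x k p ++ [x (k + p)] := by
    rw [← seqWord_succ_eq_cons, seqWord_succ_eq_concat]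
  have hperm : (x k :: seqWord x (k + 1) p).Perm (x (k + p) :: seqWord x k p) := by
    rw [hsplit]
    exact List.perm_append_singleton _ _
  constructor
  · intro h
    have hcons : (x k :: seqWord x (k + 1) p).Perm (x (k + p) :: seqWord x (k + 1) p) :=
      hperm.trans ((List.perm_cons _).mpr h.symm)
    have hmset := Multiset.coe_eq_coe.mpr hcons
    rw [← Multiset.cons_coe, ← Multiset.cons_coe] at hmset
    exact ((Multiset.cons_inj_left _).mp hmset).symm
  · intro h
    rw [h] at hperm
    exact (List.perm_cons _).mp hperm

theorem seqWord_perm_of_periodicOn {i n p : ℕ} (hper : ∀ t < n, x (i + t + p) = x (i + t))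
    {d : ℕ} (hd : d ≤ n) : (seqWord x (i + d) p).Perm (seqWord x i p) := by
  induction d with
  | zero => rfl
  | succ d ih =>
    have hstep := (seqWord_succ_perm_iff x (i + d) p).mpr (hper d hd)
    exact hstep.trans (ih (by omega))

theorem periodic_of_forall_seqWord_perm {p i : ℕ}
    (h : ∀ k, (seqWord x k p).Perm (seqWord x i p)) : Function.Periodic x p :=
  fun k => (seqWord_succ_perm_iff x k p).mp ((h (k + 1)).trans (h k).symm)

end Windows

section LinearRecurrence

variable {A : Type*} {K : ℕ} {x : ℕ → A}

theorem LinRec.exists_occursAt_near (hK : LinRec K x) {v : List A} (hv : v ≠ []) {k : ℕ}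
    (hocc : occursAt x v k) {s : ℕ} (hks : k ≤ s) :
    ∃ j, s ≤ j ∧ j ≤ s + K * v.length ∧ occursAt x v j := by
  induction s, hks using Nat.le_induction with
  | base => exact ⟨k, le_rfl, Nat.le_add_right _ _, hocc⟩
  | succ s _ ih =>
    obtain ⟨j, hsj, hjs, hj⟩ := ih
    rcases Nat.lt_or_ge s j with hlt | hge
    · exact ⟨j, hlt, by omega, hj⟩
    · obtain ⟨j', hjj', hj's, hj'⟩ := hK.2 v hv ⟨k, hocc⟩ j hj
      exact ⟨j', by omega, by omega, hj'⟩

theorem LinRec.exists_seqWord_eq (hK : LinRec K x) {p : ℕ} (hp : 0 < p) (i k : ℕ) :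
    ∃ d ≤ K * p, seqWord x k p = seqWord x (i + d) p := by
  obtain ⟨C, hC⟩ := hK.1 (seqWord x i (K * p + p)) ⟨i, occursAt_seqWord x i _⟩
  obtain ⟨t, hkt, -, ht⟩ := hC k
  have hv : seqWord x k p ≠ [] := by
    rw [← List.length_pos_iff, seqWord_length]
    exact hp
  obtain ⟨j, htj, hjt, hj⟩ := hK.exists_occursAt_near hv (occursAt_seqWord x k p) hkt
  rw [seqWord_length] at hjt
  refine ⟨j - t, by omega, ?_⟩
  rw [← seqWord_eq_of_occursAt_seqWord x ht (by omega), Nat.add_sub_cancel' htj]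
  rw [occursAt, seqWord_length] at hj
  exact hj.symm

theorem returnWord_length_le (hK : LinRec K x) {u w : List A} (hu : u ≠ [])
    (h : IsReturnWord x u w) : w.length ≤ K * u.length := by
  obtain ⟨i, j, hij, hi, hj, hbetween, rfl⟩ := h
  obtain ⟨j', hij', hj'i, hj'⟩ := hK.2 u hu ⟨i, hi⟩ i hi
  have hjj' : j ≤ j' := not_lt.mp fun hlt => hbetween j' hij' hlt hj'
  rw [seqWord_length]
  omega

theorem length_le_mul_returnWord_length (hK : LinRec K x) (hnp : ¬ UltPeriodic x)
    {u w : List A} (h : IsReturnWord x u w) : u.length ≤ K * w.length := by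
  obtain ⟨i, j, hij, hi, hj, -, rfl⟩ := h
  rw [seqWord_length]
  by_contra! hlong
  set p := j - i
  have hper : ∀ t < u.length, x (i + t + p) = x (i + t) := fun t ht => by
    rw [show i + t + p = j + t by omega, (occursAt_iff x).mp hi t ht, (occursAt_iff x).mp hj t ht]
  have hwindows : ∀ k, (seqWord x k p).Perm (seqWord x i p) := fun k => by
    obtain ⟨d, hd, hk⟩ := hK.exists_seqWord_eq (by omega : 0 < p) i k
    rw [hk]
    exact seqWord_perm_of_periodicOn x hper (by omega)
  have hperiodic := periodic_of_forall_seqWord_perm x hwindows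
  exact hnp ⟨p, by omega, 0, fun k _ => hperiodic k⟩

end LinearRecurrence

section Morphisms

variable {I A : Type*} (θ : I → List A) {l : List I}

theorem length_morphApply : (morphApply θ l).length = (l.map fun a => (θ a).length).sum := by
  simp [morphApply, Function.comp_def]

theorem length_morphApply_le {M : ℕ} (h : ∀ a ∈ l, (θ a).length ≤ M) :
    (morphApply θ l).length ≤ l.length * M := by
  rw [length_morphApply]
  simpa using List.sum_le_card_nsmul (l.map fun a => (θ a).length) M (by simpa using h)

theorem length_mul_le_mul_length_morphApply {m c : ℕ} (h : ∀ a ∈ l, m ≤ c * (θ a).length) :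
    l.length * m ≤ c * (morphApply θ l).length := by
  rw [length_morphApply, ← List.sum_map_mul_left]
  simpa using List.card_nsmul_le_sum (l.map fun a => c * (θ a).length) m (by simpa using h)

theorem length_le_maxLen_one {A : Type*} [Fintype A] [Nonempty A] (σ : A → List A) (a : A) :
    (σ a).length ≤ maxLen σ 1 := by
  calc (σ a).length = (morphIter σ 1 [a]).length := by simp [morphIter, morphApply]
    _ ≤ maxLen σ 1 := Finset.le_sup' (fun b => (morphIter σ 1 [b]).length) (Finset.mem_univ a)

end Morphisms

theorem return_substitution_length_bound_general {A : Type*} [Fintype A] [Nonempty A]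
    (σ : A → List A)
    (x : ℕ → A) (hnp : ¬ UltPeriodic x)
    (K : ℕ) (hK : LinRec K x)
    (u : List A) (hu : u ≠ [])
    (R : ℕ) (θ : ℕ → List A) (z : ℕ → ℕ) (hd : IsDerivedSeq x u R θ z)
    (σu : ℕ → List ℕ)
    (hσu1 : ∀ i < R, ∀ j ∈ σu i, j < R)
    (hσu2 : ∀ i < R, morphApply θ (σu i) = morphApply σ (θ i)) :
    ∀ i < R, (σu i).length ≤ maxLen σ 1 * K ^ 2 := by
  intro i hi
  have hθi : (θ i).length ≤ K * u.length := returnWord_length_le hK hu (hd.1 i hi)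
  have hlow : (σu i).length * u.length ≤ K * (morphApply θ (σu i)).length :=
    length_mul_le_mul_length_morphApply θ fun j hj =>
      length_le_mul_returnWord_length hK hnp (hd.1 j (hσu1 i hi j hj))
  have hσ : (morphApply σ (θ i)).length ≤ (θ i).length * maxLen σ 1 :=
    length_morphApply_le σ fun b _ => length_le_maxLen_one σ b
  refine Nat.le_of_mul_le_mul_right ?_ (List.length_pos_iff.mpr hu)
  calc (σu i).length * u.length ≤ K * (morphApply σ (θ i)).length := hσu2 i hi ▸ hlow
    _ ≤ K * ((K * u.length) * maxLen σ 1) := by gcongr; exact hσ.trans (by gcongr)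
    _ = maxLen σ 1 * K ^ 2 * u.length := by ring

/-- Corollary: for a primitive substitution `σ` prolongable on `a` whose fixed point
`x = σ^∞(a)` is non-periodic and linearly recurrent with constant `K_σ`, and for every
non-empty prefix `u` of `x` with `u` a prefix of `σ(u)`, the return substitution `σu`
(satisfying `Θ_{x,u} ∘ σu = σ ∘ Θ_{x,u}`) satisfies `|σu| ≤ |σ|·K_σ²`. -/
theorem return_substitution_length_bound {A : Type*} [Fintype A] [Nonempty A]
    (σ : A → List A) (a : A)
    (hprim : Primitive σ) (hgrow : Growing σ) (hprol : Prolongable σ a)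
    (x : ℕ → A) (hx : IsFixedPointOf σ a x) (hnp : ¬ UltPeriodic x)
    (K : ℕ) (hK : LinRec K x)
    (u : List A) (hu : u ≠ []) (hup : IsPrefixSeq u x)
    (huσ : u <+: morphApply σ u)
    (R : ℕ) (θ : ℕ → List A) (z : ℕ → ℕ) (hd : IsDerivedSeq x u R θ z)
    (σu : ℕ → List ℕ)
    (hσu1 : ∀ i < R, ∀ j ∈ σu i, j < R)
    (hσu2 : ∀ i < R, morphApply θ (σu i) = morphApply σ (θ i)) :
    ∀ i < R, (σu i).length ≤ maxLen σ 1 * K ^ 2 :=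
  return_substitution_length_bound_general σ x hnp K hK u hu R θ z hd σu hσu1 hσu2
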